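/- arXiv:2512.04923 — 3 statements merged into one kernel-verified Lean document; each statement's English description precedes it below -/
import Mathlib

section
/- Let q ∈ [0,1] and k ≥ 2 an integer with p = 0. If k·q ≤ 1, then x = 0 is the unique solution in [0,1] of x = q - (1-x)^k·q; if k·q > 1, this equation has exactly two solutions in [0,1], one of which is 0 and the other lies in (0,1]. -/
/-!
Writing `t = 1 - x`, the identity `1 - t ^ k = x * (1 + t + ⋯ + t ^ (k - 1))` factors the
equation as `x * (q * S(1 - x) - 1) = 0` with `S(t) = ∑_{i<k} t ^ i`. For `k ≥ 2` and `q > 0` the map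
`x ↦ q * S(1 - x)` is strictly decreasing on `[0, 1]`, from `k * q` at `0` down to `q ≤ 1` at `1`.
So it takes the value `1` at no point of `(0, 1]` when `k * q ≤ 1`, and at exactly one point of
`(0, 1]` when `k * q > 1`.
-/

open Set
open Finset (range)

theorem eq_sub_one_sub_pow_mul_iff {R : Type*} [CommRing R] [NoZeroDivisors R] (q x : R) (k : ℕ) :
    x = q - (1 - x) ^ k * q ↔ x = 0 ∨ q * ∑ i ∈ range k, (1 - x) ^ i = 1 := by
  have hfactor : q - (1 - x) ^ k * q = x * (q * ∑ i ∈ range k, (1 - x) ^ i) := by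
    have h := mul_neg_geom_sum (1 - x) k
    rw [sub_sub_cancel] at h
    linear_combination (-q) * h
  rw [hfactor, eq_comm, ← sub_eq_zero, ← mul_sub_one, mul_eq_zero, sub_eq_zero]

theorem geom_sum_strictMonoOn {R : Type*} [Semiring R] [PartialOrder R] [IsStrictOrderedRing R]
    {n : ℕ} (hn : 2 ≤ n) : StrictMonoOn (fun t : R => ∑ i ∈ range n, t ^ i) (Ici 0) := by
  intro a ha b _ hab
  exact Finset.sum_lt_sum (fun i _ => pow_le_pow_left₀ ha hab.le i)
    ⟨1, Finset.mem_range.2 (by omega), by simpa using hab⟩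

theorem mul_geom_sum_one_sub_strictAntiOn {R : Type*} [Ring R] [PartialOrder R]
    [IsStrictOrderedRing R] {q : R} (hq : 0 < q) {n : ℕ} (hn : 2 ≤ n) :
    StrictAntiOn (fun x : R => q * ∑ i ∈ range n, (1 - x) ^ i) (Iic 1) := by
  intro a ha b hb hab
  exact mul_lt_mul_of_pos_left
    (geom_sum_strictMonoOn hn (sub_nonneg.2 hb) (sub_nonneg.2 ha) (sub_lt_sub_left hab 1)) hq

theorem eq_zero_of_mul_geom_sum_one_sub_eq_one {q x : ℝ} {k : ℕ} (hq : 0 ≤ q) (hk : 2 ≤ k)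
    (hkq : (k : ℝ) * q ≤ 1) (hx : x ∈ Icc (0 : ℝ) 1)
    (hroot : q * ∑ i ∈ range k, (1 - x) ^ i = 1) : x = 0 := by
  have hq_pos : 0 < q := hq.lt_of_ne (by rintro rfl; simp at hroot)
  by_contra hx0
  have hlt := mul_geom_sum_one_sub_strictAntiOn hq_pos hk (show (0 : ℝ) ∈ Iic 1 by simp)
    (show x ∈ Iic 1 from hx.2) (hx.1.lt_of_ne' hx0)
  simp only [sub_zero, one_geom_sum] at hlt
  linarith

theorem exists_mul_geom_sum_one_sub_eq_one {q : ℝ} {k : ℕ} (hq : q ≤ 1) (hkq : 1 < (k : ℝ) * q) :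
    ∃ y ∈ Ioc (0 : ℝ) 1, q * ∑ i ∈ range k, (1 - y) ^ i = 1 := by
  have hcont : ContinuousOn (fun x : ℝ => q * ∑ i ∈ range k, (1 - x) ^ i) (Icc 0 1) := by
    fun_prop
  have hvalue_one : q * ∑ i ∈ range k, (1 - 1 : ℝ) ^ i = q := by
    simp [zero_geom_sum, show k ≠ 0 by rintro rfl; norm_num at hkq]
  have hvalue_zero : q * ∑ i ∈ range k, (1 - 0 : ℝ) ^ i = k * q := by simp [mul_comm]
  obtain ⟨y, ⟨hy0, hy1⟩, hy⟩ := intermediate_value_Icc' zero_le_one hcont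
    (show (1 : ℝ) ∈ Icc _ _ by rw [hvalue_one, hvalue_zero]; exact ⟨hq, hkq.le⟩)
  refine ⟨y, ⟨hy0.lt_of_ne ?_, hy1⟩, hy⟩
  rintro rfl
  exact hkq.ne' (hvalue_zero.symm.trans hy)

theorem stmt2 (q : ℝ) (k : ℕ) (hq : q ∈ Set.Icc (0:ℝ) 1) (hk : 2 ≤ k) :
    ((k : ℝ) * q ≤ 1 →
      ∀ x ∈ Set.Icc (0:ℝ) 1, (x = q - (1 - x) ^ k * q ↔ x = 0)) ∧
    (1 < (k : ℝ) * q →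
      (0 : ℝ) = q - (1 - (0:ℝ)) ^ k * q ∧
      ∃ y ∈ Set.Ioc (0:ℝ) 1, y = q - (1 - y) ^ k * q ∧
        ∀ x ∈ Set.Icc (0:ℝ) 1, x = q - (1 - x) ^ k * q → x = 0 ∨ x = y) := by
  refine ⟨fun hkq x hx => ?_, fun hkq => ?_⟩
  · rw [eq_sub_one_sub_pow_mul_iff]
    exact ⟨fun h => h.elim id (eq_zero_of_mul_geom_sum_one_sub_eq_one hq.1 hk hkq hx), Or.inl⟩
  · have hq_pos : 0 < q := pos_of_mul_pos_right (one_pos.trans hkq) (Nat.cast_nonneg k)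
    obtain ⟨y, hy, hroot_y⟩ := exists_mul_geom_sum_one_sub_eq_one hq.2 hkq
    refine ⟨by simp, y, hy, (eq_sub_one_sub_pow_mul_iff q y k).2 (Or.inr hroot_y),
      fun x hx hroot_x => ?_⟩
    rw [eq_sub_one_sub_pow_mul_iff] at hroot_x
    exact hroot_x.imp_right fun h =>
      (mul_geom_sum_one_sub_strictAntiOn hq_pos hk).injOn hx.2 hy.2 (h.trans hroot_y.symm)
end

section
/- Let q ∈ [1/2, 1), ε ∈ (0, 2 - 1/q), and define p_max = 2 - 1/q. For any x with 0 < x ≤ p_max - ε, we have (1 - ε/8)·q·(1-(1-x)²) ≥ x(1 + ε/4). Consequently, the sequence p_0 = p > 0, p_{i+1} = (1-ε/8)q(1-(1-p_i)²) satisfies p_{i+1} ≥ p_i(1+ε/4) as long as p_i ≤ p_max - ε, and hence reaches p_max - ε within O((1/ε)log(1/p)) iterations. -/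
/-!
Since `1 - (1 - x)^2 = x (2 - x)` and `x ≤ 2 - 1/q - ε` gives `q (2 - x) ≥ 1 + q ε ≥ 1 + ε/2`,
one step of the iteration multiplies `x` by at least `(1 - ε/8)(1 + ε/2) ≥ 1 + ε/4`. Below the
threshold the sequence therefore dominates `p (1 + ε/4)^i`, which exceeds `1` once
`i ≥ (8/ε) log (1/p)` because `log (1 + t) ≥ t/2` for `0 ≤ t ≤ 2`.
-/

open Real

lemma mul_one_add_le_mul_one_sub_sq {q ε x : ℝ} (hq : 1 / 2 ≤ q) (hε₀ : 0 ≤ ε) (hε₂ : ε ≤ 2)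
    (hx : 0 ≤ x) (hxq : x ≤ 2 - 1 / q - ε) :
    x * (1 + ε / 4) ≤ (1 - ε / 8) * q * (1 - (1 - x) ^ 2) := by
  have hq₀ : 0 < q := by linarith
  have hqx : 1 + ε / 2 ≤ q * (2 - x) :=
    calc 1 + ε / 2 ≤ q * (1 / q + ε) := by
          rw [mul_add, mul_one_div_cancel hq₀.ne']; nlinarith
      _ ≤ q * (2 - x) := by gcongr; linarith
  have hgain : 1 + ε / 4 ≤ (1 - ε / 8) * (q * (2 - x)) :=
    calc 1 + ε / 4 ≤ (1 - ε / 8) * (1 + ε / 2) := by nlinarith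
      _ ≤ (1 - ε / 8) * (q * (2 - x)) := by gcongr; linarith
  calc x * (1 + ε / 4) ≤ x * ((1 - ε / 8) * (q * (2 - x))) := by gcongr
    _ = (1 - ε / 8) * q * (1 - (1 - x) ^ 2) := by ring

lemma half_le_log_one_add {t : ℝ} (ht₀ : 0 ≤ t) (ht₂ : t ≤ 2) : t / 2 ≤ log (1 + t) :=
  calc t / 2 ≤ 2 * t / (t + 2) := by
        rw [le_div_iff₀ (by linarith)]; nlinarith
    _ ≤ log (1 + t) := le_log_one_add_of_nonneg ht₀

lemma exists_nat_le_and_one_le_mul_one_add_pow {p t : ℝ} (hp₀ : 0 < p) (hp₁ : p ≤ 1)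
    (ht₀ : 0 < t) (ht₂ : t ≤ 2) :
    ∃ N : ℕ, (N : ℝ) ≤ 2 / t * log (1 / p) + 1 ∧ 1 ≤ p * (1 + t) ^ N := by
  have hL : 0 ≤ log (1 / p) := log_nonneg (by rw [le_div_iff₀ hp₀]; linarith)
  set N := ⌈2 / t * log (1 / p)⌉₊
  refine ⟨N, (Nat.ceil_lt_add_one (by positivity)).le, ?_⟩
  have hlog : log (1 / p) ≤ log ((1 + t) ^ N) :=
    calc log (1 / p) = 2 / t * log (1 / p) * (t / 2) := by field_simp
      _ ≤ N * log (1 + t) := by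
          gcongr
          · exact Nat.le_ceil _
          · exact half_le_log_one_add ht₀.le ht₂
      _ = log ((1 + t) ^ N) := by rw [log_pow]
  rw [log_le_log_iff (by positivity) (by positivity), div_le_iff₀ hp₀] at hlog
  linarith

lemma exists_le_of_mul_le_succ {u : ℕ → ℝ} {r c : ℝ} {N : ℕ} (hr : 1 ≤ r) (hu₀ : 0 < u 0)
    (hstep : ∀ i, 0 < u i → u i < c → u i * r ≤ u (i + 1)) (hN : c ≤ u 0 * r ^ N) :
    ∃ n ≤ N, c ≤ u n := by
  by_contra! hlt
  have hgeom : ∀ i ≤ N, u 0 * r ^ i ≤ u i := by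
    intro i hi
    induction i with
    | zero => simp
    | succ i ih =>
      have hi' := ih (Nat.le_of_succ_le hi)
      have hpos : 0 < u i := lt_of_lt_of_le (by positivity) hi'
      calc u 0 * r ^ (i + 1) = u 0 * r ^ i * r := by ring
        _ ≤ u i * r := by gcongr
        _ ≤ u (i + 1) := hstep i hpos (hlt i (Nat.le_of_succ_le hi))
  linarith [hgeom N le_rfl, hlt N le_rfl]

theorem stmt12 (q ε p : ℝ) (seq : ℕ → ℝ)
    (hq : q ∈ Set.Ico (1/2 : ℝ) 1) (hε : ε ∈ Set.Ioo (0:ℝ) (2 - 1/q))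
    (hp : 0 < p) (hp' : p < 2 - 1/q)
    (h0 : seq 0 = p) (hrec : ∀ i, seq (i + 1) = (1 - ε/8) * q * (1 - (1 - seq i) ^ 2)) :
    (∀ x : ℝ, 0 < x → x ≤ (2 - 1/q) - ε →
      x * (1 + ε/4) ≤ (1 - ε/8) * q * (1 - (1 - x) ^ 2)) ∧
    (∀ i, 0 < seq i → seq i ≤ (2 - 1/q) - ε → seq i * (1 + ε/4) ≤ seq (i + 1)) ∧
    (∃ n : ℕ, (n : ℝ) ≤ 8 / ε * Real.log (1 / p) + 1 ∧ (2 - 1/q) - ε ≤ seq n) := by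
  obtain ⟨hq₁, hq₂⟩ := hq
  obtain ⟨hε₀, hεq⟩ := hε
  have hpmax : 2 - 1 / q < 1 := by
    have : 1 < 1 / q := by rw [lt_div_iff₀ (by linarith)]; linarith
    linarith
  have hgrowth : ∀ x : ℝ, 0 < x → x ≤ (2 - 1/q) - ε →
      x * (1 + ε/4) ≤ (1 - ε/8) * q * (1 - (1 - x) ^ 2) := fun x hx hxq =>
    mul_one_add_le_mul_one_sub_sq hq₁ hε₀.le (by linarith) hx.le hxq
  have hstep : ∀ i, 0 < seq i → seq i ≤ (2 - 1/q) - ε → seq i * (1 + ε/4) ≤ seq (i + 1) :=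
    fun i hpos hle => hrec i ▸ hgrowth _ hpos hle
  refine ⟨hgrowth, hstep, ?_⟩
  obtain ⟨N, hN, hpow⟩ := exists_nat_le_and_one_le_mul_one_add_pow (t := ε / 4) hp
    (by linarith) (by positivity) (by linarith)
  obtain ⟨n, hnN, hn⟩ := exists_le_of_mul_le_succ (c := (2 - 1/q) - ε) (N := N)
    (by linarith) (h0 ▸ hp) (fun i hpos hlt => hstep i hpos hlt.le) (by rw [h0]; linarith)
  refine ⟨n, ?_, hn⟩
  calc (n : ℝ) ≤ N := by exact_mod_cast hnN
    _ ≤ 8 / ε * log (1 / p) + 1 := by convert hN using 3; field_simp; norm_num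
end

section
/- Let q ∈ (1/2, 1] and x ∈ (0,1). For the exponential decay model, if x < 2 - 1/q then q(1-(1-x)²) > x, and if x > 2 - 1/q then q(1-(1-x)²) < x. Hence the supremum over all achievable success probabilities of repeated 2-way combination starting from any p ∈ (0, 2-1/q) equals 2 - 1/q. -/
theorem stmt19 (q x : ℝ) (hq : q ∈ Set.Ioc (1/2 : ℝ) 1) (hx : x ∈ Set.Ioo (0:ℝ) 1) :
    (x < 2 - 1/q → x < q * (1 - (1 - x) ^ 2)) ∧
    (2 - 1/q < x → q * (1 - (1 - x) ^ 2) < x) ∧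
    (∀ p : ℝ, ∀ seq : ℕ → ℝ, 0 < p → p < 2 - 1/q → seq 0 = p →
      (∀ n, seq (n + 1) = q * (1 - (1 - seq n) ^ 2)) →
      (⨆ n, seq n) = 2 - 1/q) := by
  obtain ⟨hq1, hq2⟩ := hq
  obtain ⟨hx1, hx2⟩ := hx
  have hq0 : 0 < q := by linarith
  -- key identity: q*(1-(1-x)^2) - x = q * x * (2 - 1/q - x)
  have key : ∀ y : ℝ, q * (1 - (1 - y) ^ 2) - y = q * y * (2 - 1/q - y) := by
    intro y
    field_simp
    ring
  have hL1 : 2 - 1/q ≤ 1 := by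
    have : 1 ≤ 1/q := by
      rw [le_div_iff₀ hq0]; linarith
    linarith
  have hL0 : 0 < 2 - 1/q := by
    have : 1/q < 2 := by
      rw [div_lt_iff₀ hq0]; linarith
    linarith
  refine ⟨?_, ?_, ?_⟩
  · intro h
    have := key x
    nlinarith
  · intro h
    have := key x
    nlinarith
  · intro p seq hp0 hpL h0 hrec
    set L := 2 - 1/q with hLdef
    -- invariant: 0 < seq n < L
    have inv : ∀ n, 0 < seq n ∧ seq n < L := by
      intro n
      induction n with
      | zero => rw [h0]; exact ⟨hp0, hpL⟩
      | succ n ih =>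
        obtain ⟨h1, h2⟩ := ih
        have hk := key (seq n)
        constructor
        · rw [hrec]
          nlinarith
        · rw [hrec]
          -- f(seq n) < L since f L = L and f increasing on x ≤ 1
          have hsn1 : seq n < 1 := lt_of_lt_of_le h2 hL1
          have hfL : q * (1 - (1 - L) ^ 2) = L := by
            have := key L
            nlinarith
          nlinarith [sq_nonneg (seq n - L)]
    have hmono : Monotone seq := by
      apply monotone_nat_of_le_succ
      intro n
      obtain ⟨h1, h2⟩ := inv n
      have hk := key (seq n)
      rw [hrec]
      nlinarith
    have hbdd : BddAbove (Set.range seq) := by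
      refine ⟨L, ?_⟩
      rintro _ ⟨n, rfl⟩
      exact (inv n).2.le
    have htend : Filter.Tendsto seq Filter.atTop (nhds (⨆ n, seq n)) :=
      tendsto_atTop_ciSup hmono hbdd
    set ℓ := ⨆ n, seq n with hldef
    have hℓp : p ≤ ℓ := h0 ▸ le_ciSup hbdd 0
    have hℓL : ℓ ≤ L := ciSup_le fun n => (inv n).2.le
    -- seq (n+1) tends to both ℓ and f ℓ
    have htend2 : Filter.Tendsto (fun n => seq (n + 1)) Filter.atTop (nhds ℓ) :=
      htend.comp (Filter.tendsto_add_atTop_nat 1)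
    have hcont : Filter.Tendsto (fun n => q * (1 - (1 - seq n) ^ 2)) Filter.atTop
        (nhds (q * (1 - (1 - ℓ) ^ 2))) := by
      have h1 : Filter.Tendsto (fun n => (1 - seq n) ^ 2) Filter.atTop
          (nhds ((1 - ℓ) ^ 2)) := (tendsto_const_nhds.sub htend).pow 2
      exact (tendsto_const_nhds.sub h1).const_mul q
    have heq : ℓ = q * (1 - (1 - ℓ) ^ 2) := by
      have : Filter.Tendsto (fun n => seq (n + 1)) Filter.atTop
          (nhds (q * (1 - (1 - ℓ) ^ 2))) := by
        simpa only [hrec] using hcont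
      exact tendsto_nhds_unique htend2 this
    have hk := key ℓ
    have hℓ0 : 0 < ℓ := lt_of_lt_of_le hp0 hℓp
    -- ℓ = q ℓ (2 - 1/q - ℓ) + ℓ  → q ℓ (L - ℓ) = 0 → ℓ = L
    nlinarith
end
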